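/- arXiv:2410.16002 — 6 statements merged into one kernel-verified Lean document; each statement's English description precedes it below -/
import Mathlib

section
/- For finitely generated groups G and G', the set of isomorphism classes of finite quotients of G equals that of G' if and only if the profinite completions of G and G' are isomorphic as topological groups. -/
/-!
Let `K_n(G)` be the intersection of the kernels of all homomorphisms `G → Sym(n)`. If `G` is
finitely generated there are finitely many such homomorphisms, so `K_n(G)` has finite index; every
normal subgroup of index `n` contains `K_n(G)`, so these subgroups are cofinal and the completion
is the inverse limit of the groups `G ⧸ K_n(G)`. Any homomorphism `G → H ⧸ K_n(H)` kills
`K_n(G)`. Hence if `G` and `H` have the same finite quotients, `G ⧸ K_n(G)` and `H ⧸ K_n(H)` are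
quotients of each other and so isomorphic. The isomorphisms between them form an inverse system of
finite nonempty sets, which has a compatible thread by König's lemma, and such a thread is an
isomorphism of the completions.

Conversely, `H` is dense in its completion, so a continuous surjection from the completion of `H`
onto that of `G`, followed by the projection onto a finite discrete quotient `G ⧸ N`, is already
surjective on `H`.
-/

universe u

section Completion

variable (G : Type u) [Group G]

/-- The index type: finite-index normal subgroups of `G`. -/
def FIN (G : Type u) [Group G] : Type u :=
  {N : Subgroup G // N.Normal ∧ N.FiniteIndex}

instance (N : FIN G) : N.1.Normal := N.2.1

instance (N : FIN G) : TopologicalSpace (G ⧸ N.1) := ⊥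

instance (N : FIN G) : DiscreteTopology (G ⧸ N.1) := ⟨rfl⟩

instance (N : FIN G) : IsTopologicalGroup (G ⧸ N.1) where
  continuous_mul := continuous_of_discreteTopology
  continuous_inv := continuous_of_discreteTopology

/-- The profinite completion of `G`: the subgroup of compatible families in the
product of all the finite quotients of `G`, topologized as a closed subgroup of the
product of the (discrete) finite quotients. -/
def completionSubgroup : Subgroup (∀ N : FIN G, G ⧸ N.1) where
  carrier := {x | ∀ (N M : FIN G) (h : N.1 ≤ M.1),
    QuotientGroup.map N.1 M.1 (MonoidHom.id G)
      (by rw [Subgroup.comap_id]; exact h) (x N) = x M}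
  one_mem' := by
    intro N M h
    simp only [Pi.one_apply, map_one]
  mul_mem' := by
    intro a b ha hb N M h
    simp only [Pi.mul_apply, map_mul, ha N M h, hb N M h]
  inv_mem' := by
    intro a ha N M h
    simp only [Pi.inv_apply, map_inv, ha N M h]

/-- The canonical map from `G` to its profinite completion. -/
def iota : G →* completionSubgroup G where
  toFun g := ⟨fun N => QuotientGroup.mk g, by
    intro N M h
    rfl⟩
  map_one' := by
    apply Subtype.ext
    funext N
    rfl
  map_mul' g h := by
    apply Subtype.ext
    funext N
    rfl

end Completion


open QuotientGroup

namespace QuotientGroup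

variable {G : Type*} [Group G] {N M L : Subgroup G} [N.Normal] [M.Normal] [L.Normal]

def mapOfLE (h : N ≤ M) : G ⧸ N →* G ⧸ M :=
  map N M (MonoidHom.id G) (by rw [Subgroup.comap_id]; exact h)

@[simp]
lemma mapOfLE_mk (h : N ≤ M) (g : G) : mapOfLE h (g : G ⧸ N) = g :=
  rfl

@[simp]
lemma mapOfLE_self (y : G ⧸ N) : mapOfLE le_rfl y = y := by
  obtain ⟨g, rfl⟩ := mk_surjective y
  rfl

@[simp]
lemma mapOfLE_mapOfLE (h₁ : N ≤ M) (h₂ : M ≤ L) (y : G ⧸ N) :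
    mapOfLE h₂ (mapOfLE h₁ y) = mapOfLE (h₁.trans h₂) y := by
  obtain ⟨g, rfl⟩ := mk_surjective y
  rfl

end QuotientGroup

instance MonoidHom.finite_of_fg {G H : Type*} [Group G] [Group H] [Group.FG G] [Finite H] :
    Finite (G →* H) := by
  obtain ⟨S, hS, hfin⟩ := Group.fg_iff.1 ‹Group.FG G›
  have : Finite S := hfin
  refine Finite.of_injective (fun f : G →* H => fun s : S => f s) fun f g h => ?_
  exact MonoidHom.eq_of_eqOn_dense hS fun x hx => congrFun h ⟨x, hx⟩

instance FIN.finiteIndex {G : Type u} [Group G] (N : FIN G) : N.1.FiniteIndex :=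
  N.2.2

lemma FIN.exists_le_of_finset {G : Type u} [Group G] (I : Finset (FIN G)) :
    ∃ N : FIN G, ∀ M ∈ I, N.1 ≤ M.1 :=
  ⟨⟨⨅ M ∈ I, M.1, Subgroup.normal_iInf_normal fun M => Subgroup.normal_iInf_normal fun _ => M.2.1,
    Subgroup.finiteIndex_iInf' _ fun M _ => M.2.2⟩, fun _ hM => biInf_le (fun M : FIN G => M.1) hM⟩

section PermKernel

variable {G H : Type*} [Group G] [Group H] {m n : ℕ}

variable (G) in
def permKernel (n : ℕ) : Subgroup G :=
  ⨅ f : G →* Equiv.Perm (Fin n), f.ker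

instance permKernel_normal : (permKernel G n).Normal :=
  Subgroup.normal_iInf_normal fun f => f.normal_ker

instance permKernel_finiteIndex [Group.FG G] : (permKernel G n).FiniteIndex :=
  Subgroup.finiteIndex_iInf fun f => Subgroup.finiteIndex_ker f

lemma permKernel_le_ker {α : Type*} [Finite α] (f : G →* Equiv.Perm α) (hα : Nat.card α ≤ n) :
    permKernel G n ≤ f.ker := by
  let ι : α ↪ Fin n := (Finite.equivFin α).toEmbedding.trans (Fin.castLEEmb hα)
  have hker : ((Equiv.Perm.viaEmbeddingHom ι).comp f).ker = f.ker :=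
    MonoidHom.ker_comp_of_injective _ _ (Equiv.Perm.viaEmbeddingHom_injective ι)
  exact hker ▸ iInf_le _ _

lemma permKernel_antitone : Antitone (permKernel G) :=
  fun _ _ hmn => le_iInf fun f => permKernel_le_ker f (by simpa using hmn)

lemma permKernel_le_of_normal (N : Subgroup G) [N.Normal] [N.FiniteIndex] :
    permKernel G N.index ≤ N := by
  have : Finite (G ⧸ N) := Subgroup.finite_quotient_of_finiteIndex
  have hker := permKernel_le_ker (MulAction.toPermHom G (G ⧸ N)) le_rfl
  rwa [← Subgroup.normalCore_eq_ker, N.normalCore_eq_self] at hker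

-- A permutation representation of `H` factors through `H ⧸ permKernel H n`; composed with `φ`
-- it becomes one of `G`, which kills `permKernel G n`.
lemma permKernel_le_ker_of_quotient (φ : G →* H ⧸ permKernel H n) :
    permKernel G n ≤ φ.ker := by
  intro x hx
  obtain ⟨h, hh⟩ := mk_surjective (φ x)
  rw [MonoidHom.mem_ker, ← hh, eq_one_iff]
  refine Subgroup.mem_iInf.2 fun f => ?_
  let f' := lift (permKernel H n) f (iInf_le _ f)
  exact (congrArg f' hh).trans (Subgroup.mem_iInf.1 hx (f'.comp φ))

def permKernelLift (φ : G →* H ⧸ permKernel H n) :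
    G ⧸ permKernel G n →* H ⧸ permKernel H n :=
  lift _ φ (permKernel_le_ker_of_quotient φ)

lemma permKernelLift_surjective {φ : G →* H ⧸ permKernel H n} (hφ : Function.Surjective φ) :
    Function.Surjective (permKernelLift φ) := by
  intro y
  obtain ⟨g, rfl⟩ := hφ y
  exact ⟨g, rfl⟩

end PermKernel

lemma exists_permKernel_le {G : Type u} [Group G] (M : FIN G) : ∃ n, permKernel G n ≤ M.1 :=
  ⟨M.1.index, permKernel_le_of_normal M.1⟩

lemma nonempty_levelIso_of_forall_surjective_iff {G H : Type u} [Group G] [Group H]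
    [Group.FG G] [Group.FG H]
    (hQ : ∀ (Q : Type u) [Group Q] [Finite Q],
      (∃ φ : G →* Q, Function.Surjective φ) ↔ (∃ φ : H →* Q, Function.Surjective φ))
    (n : ℕ) : Nonempty (G ⧸ permKernel G n ≃* H ⧸ permKernel H n) := by
  obtain ⟨φ, hφ⟩ := (hQ (H ⧸ permKernel H n)).2 ⟨mk' _, mk'_surjective _⟩
  obtain ⟨ψ, hψ⟩ := (hQ (G ⧸ permKernel G n)).1 ⟨mk' _, mk'_surjective _⟩
  have hinj : Function.Injective (permKernelLift ψ ∘ permKernelLift φ) :=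
    Finite.injective_iff_surjective.2
      ((permKernelLift_surjective hψ).comp (permKernelLift_surjective hφ))
  exact ⟨MulEquiv.ofBijective _ ⟨hinj.of_comp, permKernelLift_surjective hφ⟩⟩

section LevelIsos

open CategoryTheory Opposite

variable {G H : Type*} [Group G] [Group H] {l m n : ℕ}

def descendLevelHom (e : G ⧸ permKernel G n ≃* H ⧸ permKernel H n) (hmn : m ≤ n) :
    G ⧸ permKernel G m →* H ⧸ permKernel H m :=
  permKernelLift ((mapOfLE (permKernel_antitone hmn)).comp (e.toMonoidHom.comp (mk' _)))

lemma descendLevelHom_mapOfLE (e : G ⧸ permKernel G n ≃* H ⧸ permKernel H n) (hmn : m ≤ n)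
    (y : G ⧸ permKernel G n) :
    descendLevelHom e hmn (mapOfLE (permKernel_antitone hmn) y) =
      mapOfLE (permKernel_antitone hmn) (e y) := by
  obtain ⟨g, rfl⟩ := mk_surjective y
  rfl

lemma descendLevelHom_symm_comp (e : G ⧸ permKernel G n ≃* H ⧸ permKernel H n) (hmn : m ≤ n) :
    (descendLevelHom e.symm hmn).comp (descendLevelHom e hmn) = MonoidHom.id _ := by
  refine monoidHom_ext _ (MonoidHom.ext fun g => ?_)
  have hg : mk' (permKernel G m) g = mapOfLE (permKernel_antitone hmn) (g : G ⧸ permKernel G n) :=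
    rfl
  rw [MonoidHom.comp_apply, MonoidHom.comp_apply, hg, MonoidHom.comp_apply,
    descendLevelHom_mapOfLE, descendLevelHom_mapOfLE, e.symm_apply_apply]
  rfl

def descendLevel (e : G ⧸ permKernel G n ≃* H ⧸ permKernel H n) (hmn : m ≤ n) :
    G ⧸ permKernel G m ≃* H ⧸ permKernel H m :=
  (descendLevelHom e hmn).toMulEquiv (descendLevelHom e.symm hmn)
    (descendLevelHom_symm_comp e hmn) (descendLevelHom_symm_comp e.symm hmn)

lemma descendLevel_mapOfLE (e : G ⧸ permKernel G n ≃* H ⧸ permKernel H n) (hmn : m ≤ n)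
    (y : G ⧸ permKernel G n) :
    descendLevel e hmn (mapOfLE (permKernel_antitone hmn) y) =
      mapOfLE (permKernel_antitone hmn) (e y) :=
  descendLevelHom_mapOfLE e hmn y

lemma descendLevel_symm (e : G ⧸ permKernel G n ≃* H ⧸ permKernel H n) (hmn : m ≤ n) :
    descendLevel e.symm hmn = (descendLevel e hmn).symm :=
  rfl

lemma descendLevel_self (e : G ⧸ permKernel G n ≃* H ⧸ permKernel H n) :
    descendLevel e le_rfl = e := by
  ext y
  simpa using descendLevel_mapOfLE e le_rfl y

lemma descendLevel_descendLevel (e : G ⧸ permKernel G n ≃* H ⧸ permKernel H n) (hlm : l ≤ m)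
    (hmn : m ≤ n) : descendLevel (descendLevel e hmn) hlm = descendLevel e (hlm.trans hmn) := by
  ext y
  obtain ⟨g, rfl⟩ := mk_surjective y
  have hg : (g : G ⧸ permKernel G l) = mapOfLE (permKernel_antitone hlm)
      (mapOfLE (permKernel_antitone hmn) (g : G ⧸ permKernel G n)) :=
    rfl
  rw [hg, descendLevel_mapOfLE, descendLevel_mapOfLE, mapOfLE_mapOfLE, mapOfLE_mapOfLE,
    descendLevel_mapOfLE]

def IsCompatibleLevelIsos (s : ∀ n, G ⧸ permKernel G n ≃* H ⧸ permKernel H n) : Prop :=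
  ∀ m n (hmn : m ≤ n), descendLevel (s n) hmn = s m

lemma IsCompatibleLevelIsos.symm {s : ∀ n, G ⧸ permKernel G n ≃* H ⧸ permKernel H n}
    (hs : IsCompatibleLevelIsos s) : IsCompatibleLevelIsos fun n => (s n).symm :=
  fun m n hmn => by rw [descendLevel_symm, hs m n hmn]

variable (G H) in
def levelIsoFunctor : ℕᵒᵖ ⥤ Type _ where
  obj n := G ⧸ permKernel G n.unop ≃* H ⧸ permKernel H n.unop
  map f := TypeCat.ofHom fun e => descendLevel e (leOfHom f.unop)
  map_id _ := ConcreteCategory.hom_ext _ _ descendLevel_self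
  map_comp f g := ConcreteCategory.hom_ext _ _ fun e =>
    (descendLevel_descendLevel e (leOfHom g.unop) (leOfHom f.unop)).symm

lemma exists_isCompatibleLevelIsos [Group.FG G]
    (hne : ∀ n, Nonempty (G ⧸ permKernel G n ≃* H ⧸ permKernel H n)) :
    ∃ s : ∀ n, G ⧸ permKernel G n ≃* H ⧸ permKernel H n, IsCompatibleLevelIsos s := by
  have (j : ℕᵒᵖ) : Finite ((levelIsoFunctor G H).obj j) := MulEquiv.finite_left
  have (j : ℕᵒᵖ) : Nonempty ((levelIsoFunctor G H).obj j) := hne j.unop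
  obtain ⟨s, hs⟩ := nonempty_sections_of_finite_inverse_system (levelIsoFunctor G H)
  exact ⟨fun n => s (op n), fun m n hmn => hs (homOfLE hmn).op⟩

end LevelIsos

namespace completionSubgroup

variable {G : Type u} [Group G]

def proj (N : Subgroup G) [N.Normal] [N.FiniteIndex] : completionSubgroup G →* G ⧸ N :=
  (Pi.evalMonoidHom (fun M : FIN G => G ⧸ M.1) ⟨N, inferInstance, inferInstance⟩).comp
    (completionSubgroup G).subtype

section Proj

variable {N M : Subgroup G} [N.Normal] [N.FiniteIndex] [M.Normal] [M.FiniteIndex]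

-- `G ⧸ N` carries a topology only when `N` is presented as an element of `FIN G`.
lemma isLocallyConstant_proj : IsLocallyConstant (proj N) := by
  obtain ⟨N', rfl⟩ : ∃ N' : FIN G, N'.1 = N := ⟨⟨N, inferInstance, inferInstance⟩, rfl⟩
  have hc : Continuous fun x : completionSubgroup G => x.1 N' :=
    (continuous_apply N').comp continuous_subtype_val
  exact (IsLocallyConstant.iff_continuous _).2 hc

lemma mapOfLE_proj (h : N ≤ M) (x : completionSubgroup G) : mapOfLE h (proj N x) = proj M x :=
  x.2 ⟨N, inferInstance, inferInstance⟩ ⟨M, inferInstance, inferInstance⟩ h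

lemma proj_iota (g : G) : proj N (iota G g) = g :=
  rfl

lemma proj_surjective : Function.Surjective (proj N) := fun y => by
  obtain ⟨g, rfl⟩ := mk_surjective y
  exact ⟨iota G g, rfl⟩

end Proj

section Cofinal

variable (L : ℕ → Subgroup G) [∀ n, (L n).Normal]

lemma ext_of_cofinal [∀ n, (L n).FiniteIndex] (hcof : ∀ M : FIN G, ∃ n, L n ≤ M.1)
    {x y : completionSubgroup G} (h : ∀ n, proj (L n) x = proj (L n) y) : x = y := by
  refine Subtype.ext (funext fun M => ?_)
  obtain ⟨n, hn⟩ := hcof M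
  change proj M.1 x = proj M.1 y
  rw [← mapOfLE_proj hn x, ← mapOfLE_proj hn y, h n]

variable {X : Type*} [Group X] (hL : Antitone L) {f : ∀ n, X →* G ⧸ L n}

lemma mapOfLE_eq_of_compatible (hf : ∀ m n (hmn : m ≤ n) x, mapOfLE (hL hmn) (f n x) = f m x)
    {M : Subgroup G} [M.Normal] {m n : ℕ} (hm : L m ≤ M) (hn : L n ≤ M) (x : X) :
    mapOfLE hm (f m x) = mapOfLE hn (f n x) := by
  have key {k : ℕ} (hk : L k ≤ M) (hkn : k ≤ max m n) :
      mapOfLE hk (f k x) = mapOfLE ((hL hkn).trans hk) (f (max m n) x) := by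
    rw [← hf k (max m n) hkn x, mapOfLE_mapOfLE]
  rw [key hm (le_max_left m n), key hn (le_max_right m n)]

noncomputable def liftOfCofinal (hcof : ∀ M : FIN G, ∃ n, L n ≤ M.1) (f : ∀ n, X →* G ⧸ L n)
    (hf : ∀ m n (hmn : m ≤ n) x, mapOfLE (hL hmn) (f n x) = f m x) :
    X →* completionSubgroup G where
  toFun x := ⟨fun M => mapOfLE (hcof M).choose_spec (f _ x), fun N M hNM => by
    change mapOfLE hNM (mapOfLE _ _) = _
    rw [mapOfLE_mapOfLE]
    exact mapOfLE_eq_of_compatible L hL hf _ _ x⟩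
  map_one' := Subtype.ext (funext fun M => by simp)
  map_mul' x y := Subtype.ext (funext fun M => by simp)

variable (hcof : ∀ M : FIN G, ∃ n, L n ≤ M.1)
  (hf : ∀ m n (hmn : m ≤ n) x, mapOfLE (hL hmn) (f n x) = f m x)

lemma proj_liftOfCofinal [∀ n, (L n).FiniteIndex] (n : ℕ) (x : X) :
    proj (L n) (liftOfCofinal L hL hcof f hf x) = f n x :=
  (mapOfLE_eq_of_compatible L hL hf (hcof ⟨L n, inferInstance, inferInstance⟩).choose_spec le_rfl
    x).trans (mapOfLE_self _)

lemma continuous_liftOfCofinal [TopologicalSpace X] (hc : ∀ n, IsLocallyConstant (f n)) :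
    Continuous (liftOfCofinal L hL hcof f hf) :=
  (continuous_pi fun M => ((hc _).comp (mapOfLE (hcof M).choose_spec)).continuous).subtype_mk _

end Cofinal

section LevelIsos

variable {H : Type u} [Group H] [Group.FG G] (s : ∀ n, G ⧸ permKernel G n ≃* H ⧸ permKernel H n)

def levelIsoProj (n : ℕ) : completionSubgroup G →* H ⧸ permKernel H n :=
  (s n).toMonoidHom.comp (proj (permKernel G n))

lemma mapOfLE_levelIsoProj (hs : IsCompatibleLevelIsos s) {m n : ℕ} (hmn : m ≤ n)
    (x : completionSubgroup G) :
    mapOfLE (permKernel_antitone hmn) (levelIsoProj s n x) = levelIsoProj s m x := by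
  rw [levelIsoProj, levelIsoProj, MonoidHom.comp_apply, MonoidHom.comp_apply, ← hs m n hmn,
    ← mapOfLE_proj (permKernel_antitone hmn) x]
  exact (descendLevel_mapOfLE (s n) hmn _).symm

variable (hs : IsCompatibleLevelIsos s)

noncomputable def ofLevelIsos : completionSubgroup G →* completionSubgroup H :=
  liftOfCofinal (permKernel H) permKernel_antitone exists_permKernel_le (levelIsoProj s)
    fun _ _ hmn => mapOfLE_levelIsoProj s hs hmn

lemma continuous_ofLevelIsos : Continuous (ofLevelIsos s hs) :=
  continuous_liftOfCofinal _ _ _ _ fun _ => isLocallyConstant_proj.comp _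

lemma proj_ofLevelIsos [Group.FG H] (n : ℕ) (x : completionSubgroup G) :
    proj (permKernel H n) (ofLevelIsos s hs x) = s n (proj (permKernel G n) x) :=
  proj_liftOfCofinal _ _ _ _ n x

noncomputable def mulEquivOfLevelIsos [Group.FG H] :
    completionSubgroup G ≃* completionSubgroup H where
  toFun := ofLevelIsos s hs
  invFun := ofLevelIsos _ hs.symm
  left_inv x := ext_of_cofinal _ exists_permKernel_le fun n => by
    rw [proj_ofLevelIsos, proj_ofLevelIsos, MulEquiv.symm_apply_apply]
  right_inv x := ext_of_cofinal _ exists_permKernel_le fun n => by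
    rw [proj_ofLevelIsos, proj_ofLevelIsos, MulEquiv.apply_symm_apply]
  map_mul' := map_mul _

end LevelIsos

lemma denseRange_iota : DenseRange (iota G) := by
  intro x
  rw [mem_closure_iff]
  rintro _ ⟨V, hV, rfl⟩ hxV
  obtain ⟨I, u, hu, hIV⟩ := isOpen_pi_iff.1 hV x.1 hxV
  obtain ⟨N, hN⟩ := FIN.exists_le_of_finset I
  obtain ⟨g, hg⟩ := mk_surjective (proj N.1 x)
  refine ⟨iota G g, hIV fun M hM => ?_, g, rfl⟩
  change proj M.1 (iota G g) ∈ u M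
  rw [proj_iota, ← mapOfLE_mk (hN M hM), hg, mapOfLE_proj]
  exact (hu M hM).2

lemma surjective_proj_comp_iota {H : Type u} [Group H]
    {Φ : completionSubgroup H →* completionSubgroup G} (hc : Continuous Φ)
    (hsurj : Function.Surjective Φ) (N : FIN G) :
    Function.Surjective (proj N.1 ∘ Φ ∘ iota H) := by
  have hdense : DenseRange (proj N.1 ∘ Φ ∘ iota H) :=
    (proj_surjective.comp hsurj).denseRange.comp denseRange_iota
      (isLocallyConstant_proj.continuous.comp hc)
  exact Set.range_eq_univ.1 (by simpa [(isClosed_discrete _).closure_eq] using hdense.closure_range)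

lemma exists_surjective_of_surjective {H : Type u} [Group H]
    {Φ : completionSubgroup H →* completionSubgroup G} (hc : Continuous Φ)
    (hsurj : Function.Surjective Φ) {Q : Type u} [Group Q] [Finite Q] {φ : G →* Q}
    (hφ : Function.Surjective φ) : ∃ ψ : H →* Q, Function.Surjective ψ :=
  let κ := quotientKerEquivOfSurjective φ hφ
  ⟨κ.toMonoidHom.comp ((proj φ.ker).comp (Φ.comp (iota H))),
    κ.surjective.comp (surjective_proj_comp_iota hc hsurj ⟨φ.ker, inferInstance, inferInstance⟩)⟩

end completionSubgroup

/-- For finitely generated groups `G` and `G'`, the collections of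
isomorphism classes of finite quotients coincide if and only if the profinite
completions are isomorphic as topological groups. -/
theorem finite_quotients_eq_iff_profinite_completions_iso
    (G G' : Type u) [Group G] [Group G'] [Group.FG G] [Group.FG G'] :
    (∀ (Q : Type u) [Group Q] [Finite Q],
        (∃ φ : G →* Q, Function.Surjective φ) ↔ (∃ φ : G' →* Q, Function.Surjective φ))
    ↔ ∃ e : completionSubgroup G ≃* completionSubgroup G',
        Continuous (⇑e) ∧ Continuous (⇑e.symm) := by
  open completionSubgroup in
  constructor
  · intro hQ
    obtain ⟨s, hs⟩ := exists_isCompatibleLevelIsos (nonempty_levelIso_of_forall_surjective_iff hQ)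
    exact ⟨mulEquivOfLevelIsos s hs, continuous_ofLevelIsos s hs,
      continuous_ofLevelIsos _ hs.symm⟩
  · rintro ⟨e, he, he'⟩ Q _ _
    exact ⟨fun ⟨_, hφ⟩ => exists_surjective_of_surjective (Φ := e.symm.toMonoidHom)
        he' e.symm.surjective hφ,
      fun ⟨_, hφ⟩ => exists_surjective_of_surjective (Φ := e.toMonoidHom) he e.surjective hφ⟩
end

section
/- The profinite completion functor is right exact: given a short exact sequence of groups 1 → K → G → L → 1, the induced sequence of profinite completions K̂ → Ĝ → L̂ → 1 is exact, i.e. the image of K̂ in Ĝ is a normal subgroup whose quotient is isomorphic to L̂. -/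
universe u

section CompletionMap

variable {G H : Type u} [Group G] [Group H]

/-- Pulling back a finite-index normal subgroup along a homomorphism. -/
def comapFIN (f : G →* H) (M : FIN H) : FIN G :=
  ⟨M.1.comap f, M.2.1.comap f, by
    have hker : M.1.comap f = ((QuotientGroup.mk' M.1).comp f).ker := by
      rw [← MonoidHom.comap_ker, QuotientGroup.ker_mk']
    rw [hker]
    haveI : M.1.FiniteIndex := M.2.2
    haveI : Finite (H ⧸ M.1) := Subgroup.finite_quotient_of_finiteIndex
    haveI : Finite (((QuotientGroup.mk' M.1).comp f).range) := Subtype.finite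
    exact Subgroup.finiteIndex_ker _⟩

/-- Functoriality of the profinite completion: the homomorphism between
profinite completions induced by a homomorphism of groups. -/
def completionMap (f : G →* H) : completionSubgroup G →* completionSubgroup H where
  toFun x := ⟨fun M => QuotientGroup.map (comapFIN f M).1 M.1 f le_rfl (x.1 (comapFIN f M)), by
    intro M M' h
    have hc : (comapFIN f M).1 ≤ (comapFIN f M').1 := Subgroup.comap_mono h
    dsimp only
    rw [← x.2 (comapFIN f M) (comapFIN f M') hc]
    induction x.1 (comapFIN f M) using QuotientGroup.induction_on with
    | H g => rfl⟩
  map_one' := by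
    apply Subtype.ext
    funext M
    simp only [OneMemClass.coe_one, Pi.one_apply, map_one]
  map_mul' x y := by
    apply Subtype.ext
    funext M
    simp only [MulMemClass.coe_mul, Pi.mul_apply, map_mul]

end CompletionMap

/-!
The completion `Ĝ` is a closed subgroup of a product of finite discrete groups, hence compact,
and every `f̂` is continuous, so the image of `f̂` is closed. An element of `Ĥ` therefore lies in
the image of `f̂` as soon as each of its coordinates in a finite quotient `H ⧸ M` lifts along `f`.
This gives surjectivity of `ψ̂` at once. For `ker ψ̂ ⊆ im φ̂`, an `x ∈ ker ψ̂` read in `G ⧸ N` as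
`g` satisfies `ψ g ∈ ψ N` (look at the coordinate of `ψ̂ x` at the finite-index subgroup `ψ N`),
so `g ∈ φ(K) N`. The inclusion `im φ̂ ⊆ ker ψ̂` is functoriality: `ψ̂ ∘ φ̂ = (ψ ∘ φ)^ = 1̂ = 1`.
-/

instance instFiniteQuotientFIN {G : Type u} [Group G] (N : FIN G) : Finite (G ⧸ N.1) :=
  have := N.2.2
  Subgroup.finite_quotient_of_finiteIndex

namespace FIN

variable {G H : Type u} [Group G] [Group H]

lemma exists_le_of_finset_s2 (I : Finset (FIN G)) : ∃ P : FIN G, ∀ N ∈ I, P.1 ≤ N.1 := by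
  classical
  induction I using Finset.induction with
  | empty => exact ⟨⟨⊤, inferInstance, inferInstance⟩, by simp⟩
  | @insert N I _ ih =>
    obtain ⟨P, hP⟩ := ih
    have := N.2.1; have := N.2.2; have := P.2.1; have := P.2.2
    refine ⟨⟨N.1 ⊓ P.1, inferInstance, inferInstance⟩, ?_⟩
    intro M hM
    rcases Finset.mem_insert.mp hM with rfl | hM
    · exact inf_le_left
    · exact inf_le_right.trans (hP M hM)

def map (f : G →* H) (hf : Function.Surjective f) (N : FIN G) : FIN H :=
  ⟨N.1.map f, N.2.1.map f hf, ⟨fun h0 => N.2.2.index_ne_zero <|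
    Nat.eq_zero_of_zero_dvd (h0 ▸ N.1.index_map_dvd hf)⟩⟩

lemma le_comapFIN_map (f : G →* H) (hf : Function.Surjective f) (N : FIN G) :
    N.1 ≤ (comapFIN f (map f hf N)).1 :=
  Subgroup.le_comap_map f N.1

end FIN

namespace completionSubgroup

variable {G : Type u} [Group G]

lemma apply_eq_of_le {x y : completionSubgroup G} {P N : FIN G} (h : P.1 ≤ N.1)
    (hxy : x.1 P = y.1 P) : x.1 N = y.1 N := by
  rw [← x.2 P N h, ← y.2 P N h, hxy]

lemma isClosed : IsClosed (completionSubgroup G : Set (∀ N : FIN G, G ⧸ N.1)) := by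
  have : (completionSubgroup G : Set (∀ N : FIN G, G ⧸ N.1)) =
      ⋂ (N : FIN G) (M : FIN G) (h : N.1 ≤ M.1),
        {x | QuotientGroup.map N.1 M.1 (MonoidHom.id G)
          (by rw [Subgroup.comap_id]; exact h) (x N) = x M} := by
    ext x
    simp only [Set.mem_iInter]
    rfl
  rw [this]
  exact isClosed_iInter fun N => isClosed_iInter fun M => isClosed_iInter fun _ =>
    isClosed_eq (continuous_of_discreteTopology.comp (continuous_apply N)) (continuous_apply M)

instance : CompactSpace (completionSubgroup G) :=
  isCompact_iff_compactSpace.mp isClosed.isCompact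

lemma mem_closure_of_forall_exists_apply_eq {S : Set (completionSubgroup G)}
    {x : completionSubgroup G} (h : ∀ N : FIN G, ∃ s ∈ S, s.1 N = x.1 N) :
    x ∈ closure S := by
  rw [mem_closure_iff]
  intro o ho hxo
  obtain ⟨U, hU, rfl⟩ := isOpen_induced_iff.mp ho
  obtain ⟨I, u, hu, hsub⟩ := isOpen_pi_iff.mp hU x.1 hxo
  obtain ⟨P, hP⟩ := FIN.exists_le_of_finset_s2 I
  obtain ⟨s, hsS, hs⟩ := h P
  refine ⟨s, hsub fun N hN => ?_, hsS⟩
  rw [apply_eq_of_le (hP N hN) hs]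
  exact (hu N hN).2

end completionSubgroup

section completionMap

variable {K G H : Type u} [Group K] [Group G] [Group H]

lemma completionMap_apply_of_apply_eq_mk (f : G →* H) {x : completionSubgroup G} {M : FIN H}
    {g : G} (hx : x.1 (comapFIN f M) = QuotientGroup.mk g) :
    (completionMap f x).1 M = QuotientGroup.mk (f g) := by
  change QuotientGroup.map _ _ f le_rfl (x.1 (comapFIN f M)) = _
  rw [hx]
  rfl

lemma completionMap_iota (f : G →* H) (g : G) : completionMap f (iota G g) = iota H (f g) :=
  rfl

lemma completionMap_comp (ψ : G →* H) (φ : K →* G) :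
    completionMap (ψ.comp φ) = (completionMap ψ).comp (completionMap φ) := by
  ext x M
  obtain ⟨k, hk⟩ := QuotientGroup.mk_surjective (x.1 (comapFIN φ (comapFIN ψ M)))
  exact (completionMap_apply_of_apply_eq_mk (ψ.comp φ) hk.symm).trans
    (completionMap_apply_of_apply_eq_mk ψ (completionMap_apply_of_apply_eq_mk φ hk.symm)).symm

lemma completionMap_one : completionMap (1 : G →* H) = 1 := by
  ext x M
  obtain ⟨g, hg⟩ := QuotientGroup.mk_surjective (x.1 (comapFIN (1 : G →* H) M))
  exact (completionMap_apply_of_apply_eq_mk 1 hg.symm).trans (QuotientGroup.mk_one _)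

lemma continuous_completionMap (f : G →* H) : Continuous (completionMap f) :=
  Continuous.subtype_mk (continuous_pi fun _ => continuous_of_discreteTopology.comp
    ((continuous_apply _).comp continuous_subtype_val)) _

lemma mem_range_completionMap_of_forall_exists (f : G →* H) {y : completionSubgroup H}
    (h : ∀ M : FIN H, ∃ g : G, y.1 M = QuotientGroup.mk (f g)) :
    y ∈ (completionMap f).range := by
  have hcl : y ∈ closure (Set.range (completionMap f)) := by
    refine completionSubgroup.mem_closure_of_forall_exists_apply_eq fun M => ?_
    obtain ⟨g, hg⟩ := h M
    exact ⟨iota H (f g), ⟨iota G g, completionMap_iota f g⟩, hg.symm⟩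
  rwa [(isCompact_range (continuous_completionMap f)).isClosed.closure_eq] at hcl

end completionMap

section Exactness

variable {K G L : Type u} [Group K] [Group G] [Group L] {φ : K →* G} {ψ : G →* L}

lemma completionMap_surjective (hψ : Function.Surjective ψ) :
    Function.Surjective (completionMap ψ) := fun y =>
  mem_range_completionMap_of_forall_exists ψ fun M => by
    obtain ⟨l, hl⟩ := QuotientGroup.mk_surjective (y.1 M)
    obtain ⟨g, rfl⟩ := hψ l
    exact ⟨g, hl.symm⟩

lemma range_completionMap_le_ker_completionMap (h : φ.range ≤ ψ.ker) :
    (completionMap φ).range ≤ (completionMap ψ).ker := by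
  have hcomp : ψ.comp φ = 1 := MonoidHom.ext fun k => h ⟨k, rfl⟩
  rintro _ ⟨x, rfl⟩
  rw [MonoidHom.mem_ker, ← MonoidHom.comp_apply, ← completionMap_comp, hcomp, completionMap_one]
  rfl

lemma exists_apply_eq_mk_of_mem_ker_completionMap (hψ : Function.Surjective ψ)
    (h : ψ.ker ≤ φ.range) {x : completionSubgroup G} (hx : x ∈ (completionMap ψ).ker)
    (N : FIN G) : ∃ k : K, x.1 N = QuotientGroup.mk (φ k) := by
  obtain ⟨g, hg⟩ := QuotientGroup.mk_surjective (x.1 N)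
  have hxM : x.1 (comapFIN ψ (FIN.map ψ hψ N)) = QuotientGroup.mk g := by
    rw [← x.2 N _ (FIN.le_comapFIN_map ψ hψ N), ← hg]
    rfl
  obtain ⟨n, hn, hψn⟩ : ψ g ∈ N.1.map ψ := by
    have := congrFun (congrArg Subtype.val hx) (FIN.map ψ hψ N)
    rw [completionMap_apply_of_apply_eq_mk ψ hxM] at this
    exact (QuotientGroup.eq_one_iff (N := (FIN.map ψ hψ N).1) (ψ g)).mp this
  obtain ⟨k, hk⟩ := h (show g * n⁻¹ ∈ ψ.ker by simp [hψn])
  refine ⟨k, ?_⟩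
  rw [hk, ← hg]
  exact (QuotientGroup.mk_mul_of_mem g (N.1.inv_mem hn)).symm

lemma ker_completionMap_le_range_completionMap (hψ : Function.Surjective ψ)
    (h : ψ.ker ≤ φ.range) : (completionMap ψ).ker ≤ (completionMap φ).range := fun _ hx =>
  mem_range_completionMap_of_forall_exists φ (exists_apply_eq_mk_of_mem_ker_completionMap hψ h hx)

end Exactness

theorem completion_right_exact_general
    (K G L : Type u) [Group K] [Group G] [Group L]
    (φ : K →* G) (ψ : G →* L)
    (hψ : Function.Surjective ψ)
    (hex : φ.range = ψ.ker) :
    (completionMap φ).range.Normal ∧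
    Function.Surjective (completionMap ψ) ∧
    (completionMap ψ).ker = (completionMap φ).range ∧
    Nonempty ((completionSubgroup G ⧸ (completionMap ψ).ker) ≃* completionSubgroup L) := by
  have hsurj := completionMap_surjective hψ
  have hker : (completionMap ψ).ker = (completionMap φ).range :=
    le_antisymm (ker_completionMap_le_range_completionMap hψ hex.ge)
      (range_completionMap_le_ker_completionMap hex.le)
  exact ⟨hker ▸ inferInstance, hsurj, hker,
    ⟨QuotientGroup.quotientKerEquivOfSurjective _ hsurj⟩⟩

/-- the profinite completion functor is right exact: a short exact sequence
`1 → K → G → L → 1` induces an exact sequence `K̂ → Ĝ → L̂ → 1`; in particular the image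
of `K̂` in `Ĝ` is a normal subgroup whose quotient is isomorphic to `L̂`. -/
theorem completion_right_exact
    (K G L : Type u) [Group K] [Group G] [Group L]
    (φ : K →* G) (ψ : G →* L)
    (hφ : Function.Injective φ) (hψ : Function.Surjective ψ)
    (hex : φ.range = ψ.ker) :
    (completionMap φ).range.Normal ∧
    Function.Surjective (completionMap ψ) ∧
    (completionMap ψ).ker = (completionMap φ).range ∧
    Nonempty ((completionSubgroup G ⧸ (completionMap ψ).ker) ≃* completionSubgroup L) :=
  completion_right_exact_general K G L φ ψ hψ hex
end

section
/- Let P and Q be finitely generated free abelian groups, and let n be a positive integer. View P as a subgroup of P̂ = Ẑ ⊗_ℤ P and Q as a subgroup of Q̂ = Ẑ ⊗_ℤ Q via the canonical embeddings. Suppose Φ : P̂ → Q̂ is a continuous homomorphism, λ ∈ Ẑ is a unit, φ : P → Q is a homomorphism with Φ|_P = φ (composed with the embedding), and Φ maps the closure of n·P into λ·Q. Then φ(P) ⊆ λ·Q, and hence Φ = λ ⊗ ψ for a homomorphism ψ : P → Q with λ·ψ = φ on n·P. -/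
/-- The profinite completion of `ℤ`, as the subring of compatible families in the
product of all the finite cyclic rings `ℤ/n`. -/
def ZHatSubring : Subring (∀ n : ℕ+, ZMod (n : ℕ)) where
  carrier := {x | ∀ (m k : ℕ+) (h : (m : ℕ) ∣ (k : ℕ)),
    ZMod.castHom h (ZMod (m : ℕ)) (x k) = x m}
  zero_mem' := by intro m k h; simp
  one_mem' := by intro m k h; simp only [Pi.one_apply, map_one]
  add_mem' := fun {a b} ha hb => by
    intro m k h
    simp only [Pi.add_apply, map_add, ha m k h, hb m k h]
  mul_mem' := fun {a b} ha hb => by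
    intro m k h
    simp only [Pi.mul_apply, map_mul, ha m k h, hb m k h]
  neg_mem' := fun {a} ha => by
    intro m k h
    simp only [Pi.neg_apply, map_neg, ha m k h]

/-- The ring `Ẑ` of profinite integers. -/
abbrev ZHat : Type := ↥ZHatSubring

instance (n : ℕ) : TopologicalSpace (ZMod n) := ⊥

instance (n : ℕ) : DiscreteTopology (ZMod n) := ⟨rfl⟩

/-!
For `p ∈ P`, the hypothesis gives `n · φ(p) = Φ(n p) = λ q` for some `q ∈ Q`. Reducing modulo `n`,
where `λ` is still a unit, shows `n ∣ q`; since `Ẑ` is torsion-free, `φ(p) = λ (q / n)`. Dividing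
by `λ` coordinatewise is additive because `ℤ → Ẑ` is injective, giving `ψ` with `φ = λ ψ`. Finally
`Φ` and `λ ⊗ ψ` are continuous and agree on `P`, which is dense in `P̂`.
-/

namespace ZHat

def toZMod (m : ℕ) [NeZero m] : ZHat →+* ZMod m :=
  (Pi.evalRingHom (fun n : ℕ+ => ZMod n) ⟨m, NeZero.pos m⟩).comp ZHatSubring.subtype

theorem castHom_toZMod {m k : ℕ} [NeZero m] [NeZero k] (h : m ∣ k) (x : ZHat) :
    ZMod.castHom h (ZMod m) (toZMod k x) = toZMod m x :=
  x.2 ⟨m, NeZero.pos m⟩ ⟨k, NeZero.pos k⟩ h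

theorem ext_toZMod {x y : ZHat} (h : ∀ (m : ℕ) [NeZero m], toZMod m x = toZMod m y) : x = y :=
  Subtype.ext (funext fun m => h m)

instance : CharZero ZHat := charZero_of_inj_zero fun n hn => by
  have h := congrArg (toZMod (n + 1)) hn
  rw [map_natCast, map_zero, ZMod.natCast_eq_zero_iff] at h
  exact Nat.eq_zero_of_dvd_of_lt h n.lt_succ_self

theorem eq_zero_of_natCast_mul_eq_zero {n : ℕ} [NeZero n] {x : ZHat} (h : (n : ZHat) * x = 0) :
    x = 0 := by
  refine ext_toZMod fun m _ => ?_
  obtain ⟨v, hv⟩ := ZMod.intCast_surjective (toZMod (m * n) x)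
  have hnv : ((m * n : ℕ) : ℤ) ∣ v * n := by
    rw [← ZMod.intCast_zmod_eq_zero_iff_dvd]
    simpa [hv, mul_comm] using congrArg (toZMod (m * n)) h
  rw [Nat.cast_mul, mul_dvd_mul_iff_right (by exact_mod_cast NeZero.ne n)] at hnv
  rw [← castHom_toZMod (dvd_mul_right m n), ← hv, map_intCast, map_zero,
    ZMod.intCast_zmod_eq_zero_iff_dvd]
  exact hnv

theorem denseRange_intCast : DenseRange ((↑) : ℤ → ZHat) := by
  intro x
  rw [mem_closure_iff_nhds]
  intro U hU
  rw [nhds_induced] at hU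
  obtain ⟨V, hV, hVU⟩ := hU
  rw [nhds_pi, Filter.mem_pi] at hV
  obtain ⟨I, hI, t, ht, htV⟩ := hV
  -- an integer congruent to `x` modulo the product of the finitely many constrained levels
  set N : ℕ+ := ∏ i ∈ hI.toFinset, i
  obtain ⟨a, ha⟩ := ZMod.intCast_surjective (toZMod N x)
  refine ⟨a, hVU (htV fun i hi => ?_), a, rfl⟩
  have hiN : (i : ℕ) ∣ N := by
    rw [← PNat.dvd_iff]; exact Finset.dvd_prod_of_mem _ (hI.mem_toFinset.mpr hi)
  have : toZMod i a = toZMod i x := by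
    rw [← castHom_toZMod hiN x, ← ha, map_intCast, map_intCast]
  change toZMod i a ∈ t i
  exact this ▸ mem_of_mem_nhds (ht i)

theorem denseRange_intCast_pi (ι : Type*) : DenseRange fun (p : ι → ℤ) (i : ι) => (p i : ZHat) :=
  DenseRange.piMap fun _ => denseRange_intCast

theorem exists_intCast_eq_unit_mul {n : ℕ} [NeZero n] (u : ZHatˣ) {a q : ℤ}
    (h : ((n * a : ℤ) : ZHat) = u * q) : ∃ c : ℤ, (a : ZHat) = u * c := by
  have hq : (n : ℤ) ∣ q := by
    have h' := congrArg (toZMod n) h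
    rw [map_intCast, map_mul, map_intCast, Int.cast_mul, Int.cast_natCast,
      ZMod.natCast_self, zero_mul, eq_comm, (u.isUnit.map _).mul_right_eq_zero] at h'
    exact (ZMod.intCast_zmod_eq_zero_iff_dvd _ _).mp h'
  obtain ⟨c, rfl⟩ := hq
  refine ⟨c, eq_of_sub_eq_zero (eq_zero_of_natCast_mul_eq_zero (n := n) ?_)⟩
  push_cast at h
  linear_combination h

theorem exists_addMonoidHom_intCast_eq_unit_mul {A κ : Type*} [AddZeroClass A] (u : ZHatˣ)
    (φ : A →+ (κ → ℤ)) (h : ∀ p, ∃ q : κ → ℤ, ∀ j, (φ p j : ZHat) = u * q j) :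
    ∃ ψ : A →+ (κ → ℤ), ∀ p j, (φ p j : ZHat) = u * ψ p j := by
  choose q hq using h
  refine ⟨AddMonoidHom.mk' q fun p p' => funext fun j => Int.cast_injective (α := ZHat) ?_, hq⟩
  apply u.isUnit.mul_left_cancel
  simp only [Pi.add_apply, Int.cast_add, mul_add, ← hq, map_add]

end ZHat

theorem AddMonoidHom.apply_eq_sum_single_one {ι M : Type*} [Fintype ι] [DecidableEq ι]
    [AddCommGroup M] (f : (ι → ℤ) →+ M) (p : ι → ℤ) :
    f p = ∑ i, p i • f (Pi.single i 1) := by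
  conv_lhs => rw [pi_eq_sum_univ' p]
  simp only [map_sum, map_zsmul]

/-- let `P = ℤᵏ` and `Q = ℤˡ` be finitely generated free abelian groups,
embedded in `P̂ = Ẑᵏ` and `Q̂ = Ẑˡ`, and let `n > 0`. If `Φ : P̂ → Q̂` is a continuous
homomorphism restricting on `P` to `φ : P → Q`, `λ ∈ Ẑˣ`, and `Φ` maps the closure of
`n·P` into `λ·Q`, then `φ(P) ⊆ λ·Q`; hence `Φ = λ ⊗ ψ` for a homomorphism `ψ : P → Q`
with `λ·ψ = φ` on `n·P`. -/
theorem extension_scalar_regularity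
    (k l n : ℕ) (hn : 0 < n)
    (Φ : (Fin k → ZHat) →+ (Fin l → ZHat)) (hΦ : Continuous Φ)
    (lam : ZHatˣ) (φ : (Fin k → ℤ) →+ (Fin l → ℤ))
    (hres : ∀ p : Fin k → ℤ, Φ (fun i => ((p i : ℤ) : ZHat)) = fun j => ((φ p j : ℤ) : ZHat))
    (hmap : ⇑Φ '' closure (Set.range
          (fun p : Fin k → ℤ => fun i => (((n : ℤ) * p i : ℤ) : ZHat))) ⊆
        Set.range (fun q : Fin l → ℤ => fun j => (lam : ZHat) * ((q j : ℤ) : ZHat))) :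
    (∀ p : Fin k → ℤ, ∃ q : Fin l → ℤ, ∀ j,
        ((φ p j : ℤ) : ZHat) = (lam : ZHat) * ((q j : ℤ) : ZHat)) ∧
    ∃ ψ : (Fin k → ℤ) →+ (Fin l → ℤ),
      (∀ p : Fin k → ℤ, ∀ j,
          (lam : ZHat) * ((ψ ((n : ℤ) • p) j : ℤ) : ZHat) = ((φ ((n : ℤ) • p) j : ℤ) : ZHat)) ∧
      (∀ x : Fin k → ZHat, Φ x = fun j =>
          (lam : ZHat) * ∑ i, ((ψ (Pi.single i 1) j : ℤ) : ZHat) * x i) := by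
  have : NeZero n := ⟨hn.ne'⟩
  have hdiv : ∀ p, ∃ q : Fin l → ℤ, ∀ j, (φ p j : ZHat) = lam * q j := by
    intro p
    obtain ⟨q, hq⟩ := hmap ⟨_, subset_closure ⟨p, rfl⟩, rfl⟩
    have hnp := hres ((n : ℤ) • p)
    simp only [Pi.smul_apply, smul_eq_mul, map_zsmul] at hnp
    rw [hnp] at hq
    choose c hc using fun j => ZHat.exists_intCast_eq_unit_mul (n := n) lam (congrFun hq j).symm
    exact ⟨c, hc⟩
  obtain ⟨ψ, hψ⟩ := ZHat.exists_addMonoidHom_intCast_eq_unit_mul lam φ hdiv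
  refine ⟨hdiv, ψ, fun p j => (hψ _ j).symm, congrFun ?_⟩
  refine (ZHat.denseRange_intCast_pi (Fin k)).equalizer hΦ (by fun_prop) (funext fun p => ?_)
  ext j
  simp only [Function.comp_apply, hres, hψ, ψ.apply_eq_sum_single_one p, Finset.sum_apply,
    Pi.smul_apply, smul_eq_mul, Int.cast_sum, Int.cast_mul, mul_comm]
end

section
/- Consider 2×2 matrices over Ẑ: suppose D₀ = [[λ₀, ρ₀],[0, μ₀]] and D₁ = [[λ₁, ρ₁],[0, μ₁]] are upper-triangular with λᵢ, μᵢ ∈ Ẑ^×, and A = [[α, β],[γ, δ]], A' = [[α', β'],[γ', δ']] are matrices in GL(2,ℤ) with γ ≠ 0 and γ' ≠ 0, satisfying D₁·A = A'·D₀. Then γ' = ±γ, μ₁ = ±λ₀, and λ₁ = ±μ₀. -/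
open Matrix

/-!
Comparing lower-left entries in `D₁ A = A' D₀` gives `μ₁ γ = λ₀ γ'`; doing the same after
multiplying by the adjugates of `A'` and `A` gives `λ₁ γ' det A = μ₀ γ det A'`. Each is an
identity `u n = v m` with units `u, v` of `Ẑ` and integers `n ≠ 0`, `m`. Reducing modulo `|n|`
and `|m|` shows `n ∣ m ∣ n` in `ℤ`, so `m = ±n`; and `u = ±v` because a nonzero integer is a
non-zero-divisor in `Ẑ`.
-/

theorem ZMod.castHom_eq_zero_of_mul_eq_zero {m N : ℕ} (hN : N ≠ 0) {y : ZMod (m * N)}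
    (h : (N : ZMod (m * N)) * y = 0) : ZMod.castHom (dvd_mul_right m N) (ZMod m) y = 0 := by
  obtain ⟨z, rfl⟩ := ZMod.intCast_surjective y
  rw [← Int.cast_natCast, ← Int.cast_mul, ZMod.intCast_zmod_eq_zero_iff_dvd] at h
  rw [map_intCast, ZMod.intCast_zmod_eq_zero_iff_dvd]
  push_cast at h
  rw [mul_comm (m : ℤ)] at h
  exact (mul_dvd_mul_iff_left (by exact_mod_cast hN)).mp h

namespace ZHat

def proj (k : ℕ+) : ZHat →+* ZMod (k : ℕ) :=
  (Pi.evalRingHom (fun n : ℕ+ => ZMod (n : ℕ)) k).comp ZHatSubring.subtype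

instance inst_s13 : CharZero ZHat where
  cast_injective a b hab := by
    let k : ℕ+ := ⟨a + b + 1, by omega⟩
    have hk := congrArg (proj k) hab
    rw [map_natCast, map_natCast, ZMod.natCast_eq_natCast_iff',
      Nat.mod_eq_of_lt (show a < k by simp [k]),
      Nat.mod_eq_of_lt (show b < k by simp [k])] at hk
    exact hk

theorem intCast_dvd_intCast_iff {m n : ℤ} (hn : n ≠ 0) : (n : ZHat) ∣ (m : ZHat) ↔ n ∣ m := by
  refine ⟨fun ⟨c, hc⟩ => ?_, map_dvd (Int.castRingHom ZHat)⟩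
  let k : ℕ+ := ⟨n.natAbs, Int.natAbs_pos.mpr hn⟩
  have hnk : (n : ZMod k) = 0 :=
    (ZMod.intCast_zmod_eq_zero_iff_dvd n k).mpr (Int.natAbs_dvd.mpr dvd_rfl)
  have hmk := congrArg (proj k) hc
  rw [map_mul, map_intCast, map_intCast, hnk, zero_mul,
    ZMod.intCast_zmod_eq_zero_iff_dvd] at hmk
  exact Int.natAbs_dvd.mp hmk

theorem eq_zero_of_intCast_mul_eq_zero {n : ℤ} (hn : n ≠ 0) {x : ZHat}
    (h : (n : ZHat) * x = 0) : x = 0 := by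
  let N : ℕ+ := ⟨n.natAbs, Int.natAbs_pos.mpr hn⟩
  have hN : (N : ZHat) * x = 0 := by
    obtain ⟨c, hc⟩ : (n : ZHat) ∣ ((N : ℤ) : ZHat) :=
      map_dvd (Int.castRingHom ZHat) (Int.dvd_natAbs.mpr dvd_rfl)
    rw [← Int.cast_natCast, hc, mul_right_comm, h, zero_mul]
  ext m : 2
  rw [← x.2 m (m * N) (dvd_mul_right _ _)]
  have hmN := congrArg (proj (m * N)) hN
  rw [map_mul, map_natCast, map_zero] at hmN
  exact ZMod.castHom_eq_zero_of_mul_eq_zero N.ne_zero hmN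

theorem eq_or_eq_neg_of_units_mul_intCast_eq {u v : ZHatˣ} {m n : ℤ} (hn : n ≠ 0)
    (h : (u : ZHat) * n = v * m) : (m = n ∨ m = -n) ∧ ((u : ZHat) = v ∨ (u : ZHat) = -v) := by
  have hm : m ≠ 0 := by
    rintro rfl
    simp [hn] at h
  have hnm : n ∣ m := (intCast_dvd_intCast_iff hn).mp
    ⟨↑v⁻¹ * ↑u, by linear_combination (-(↑v⁻¹ : ZHat)) * h - (m : ZHat) * v.inv_mul⟩
  have hmn : m ∣ n := (intCast_dvd_intCast_iff hm).mp
    ⟨↑u⁻¹ * ↑v, by linear_combination (↑u⁻¹ : ZHat) * h - (n : ZHat) * u.inv_mul⟩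
  have hm_eq := Int.natAbs_eq_natAbs_iff.mp (Int.natAbs_eq_of_dvd_dvd hmn hnm)
  refine ⟨hm_eq, ?_⟩
  rcases hm_eq with rfl | rfl
  · exact .inl (sub_eq_zero.mp (eq_zero_of_intCast_mul_eq_zero hn (by linear_combination h)))
  · push_cast at h
    exact .inr (eq_neg_of_add_eq_zero_left
      (eq_zero_of_intCast_mul_eq_zero hn (by linear_combination h)))

end ZHat

theorem Matrix.det_smul_adjugate_mul_of_mul_eq {n R : Type*} [Fintype n] [DecidableEq n]
    [CommRing R] {D₀ D₁ A A' : Matrix n n R} (h : D₁ * A = A' * D₀) :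
    A.det • (A'.adjugate * D₁) = A'.det • (D₀ * A.adjugate) := by
  calc A.det • (A'.adjugate * D₁) = A'.adjugate * (D₁ * A) * A.adjugate := by
        rw [Matrix.mul_assoc, Matrix.mul_assoc, mul_adjugate, Matrix.mul_smul, Matrix.mul_one,
          Matrix.mul_smul]
    _ = A'.det • (D₀ * A.adjugate) := by
        rw [h, ← Matrix.mul_assoc, adjugate_mul, Matrix.smul_mul, Matrix.one_mul,
          Matrix.smul_mul]

section UpperTriangular

variable {R : Type*} [CommRing R] (a b d : R) (M : Matrix (Fin 2) (Fin 2) R)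

theorem Matrix.upperTriangular_mul_apply_one_zero : (!![a, b; 0, d] * M) 1 0 = d * M 1 0 := by
  simp [Matrix.mul_apply]

theorem Matrix.mul_upperTriangular_apply_one_zero : (M * !![a, b; 0, d]) 1 0 = M 1 0 * a := by
  simp [Matrix.mul_apply]

end UpperTriangular

theorem triangular_compatibility_general
    (lam0 mu0 lam1 mu1 : ZHatˣ) (rho0 rho1 : ZHat)
    (A A' : Matrix (Fin 2) (Fin 2) ℤ) (hA : IsUnit A.det)
    (hγ : A 1 0 ≠ 0) (hγ' : A' 1 0 ≠ 0)
    (h : (!![(lam1 : ZHat), rho1; 0, (mu1 : ZHat)]) * (A.map (Int.cast : ℤ → ZHat)) =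
         (A'.map (Int.cast : ℤ → ZHat)) * (!![(lam0 : ZHat), rho0; 0, (mu0 : ZHat)])) :
    (A' 1 0 = A 1 0 ∨ A' 1 0 = -(A 1 0)) ∧
    ((mu1 : ZHat) = (lam0 : ZHat) ∨ (mu1 : ZHat) = -(lam0 : ZHat)) ∧
    ((lam1 : ZHat) = (mu0 : ZHat) ∨ (lam1 : ZHat) = -(mu0 : ZHat)) := by
  have hγγ' : (mu1 : ZHat) * (A 1 0 : ℤ) = lam0 * (A' 1 0 : ℤ) := by
    have h10 := congrFun (congrFun h 1) 0
    rw [upperTriangular_mul_apply_one_zero, mul_upperTriangular_apply_one_zero] at h10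
    simpa [mul_comm] using h10
  have hlam : (lam1 : ZHat) * (A' 1 0 * A.det : ℤ) = mu0 * (A 1 0 * A'.det : ℤ) := by
    have h10 := congrFun (congrFun (det_smul_adjugate_mul_of_mul_eq h) 1) 0
    rw [Matrix.smul_apply, Matrix.smul_apply, upperTriangular_mul_apply_one_zero,
      mul_upperTriangular_apply_one_zero] at h10
    simp only [← Int.cast_det, adjugate_fin_two, map_apply, of_apply, cons_val', cons_val_zero,
      cons_val_fin_one, cons_val_one, neg_mul, smul_eq_mul, mul_neg, neg_inj] at h10
    rw [Int.cast_mul, Int.cast_mul]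
    linear_combination h10
  obtain ⟨hγ_eq, hμ_eq⟩ := ZHat.eq_or_eq_neg_of_units_mul_intCast_eq hγ hγγ'
  exact ⟨hγ_eq, hμ_eq,
    (ZHat.eq_or_eq_neg_of_units_mul_intCast_eq (mul_ne_zero hγ' hA.ne_zero) hlam).2⟩

/-- if upper-triangular matrices `D₀, D₁` over `Ẑ` with unit diagonal
entries satisfy `D₁·A = A'·D₀` for matrices `A, A' ∈ GL(2,ℤ)` with nonzero lower-left
entries `γ, γ'`, then `γ' = ±γ`, `μ₁ = ±λ₀` and `λ₁ = ±μ₀`. -/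
theorem triangular_compatibility
    (lam0 mu0 lam1 mu1 : ZHatˣ) (rho0 rho1 : ZHat)
    (A A' : Matrix (Fin 2) (Fin 2) ℤ) (hA : IsUnit A.det) (hA' : IsUnit A'.det)
    (hγ : A 1 0 ≠ 0) (hγ' : A' 1 0 ≠ 0)
    (h : (!![(lam1 : ZHat), rho1; 0, (mu1 : ZHat)]) * (A.map (Int.cast : ℤ → ZHat)) =
         (A'.map (Int.cast : ℤ → ZHat)) * (!![(lam0 : ZHat), rho0; 0, (mu0 : ZHat)])) :
    (A' 1 0 = A 1 0 ∨ A' 1 0 = -(A 1 0)) ∧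
    ((mu1 : ZHat) = (lam0 : ZHat) ∨ (mu1 : ZHat) = -(lam0 : ZHat)) ∧
    ((lam1 : ZHat) = (mu0 : ZHat) ∨ (lam1 : ZHat) = -(mu0 : ZHat)) :=
  triangular_compatibility_general lam0 mu0 lam1 mu1 rho0 rho1 A A' hA hγ hγ' h
end

section
/- In the setting of upper-triangular compatibility D₁·A = A'·D₀ with A, A' ∈ GL(2,ℤ) having nonzero lower-left entries γ, γ', and Dᵢ = [[λᵢ,ρᵢ],[0,μᵢ]] with λᵢ, μᵢ ∈ Ẑ^×: if additionally λ₀ = ±μ₀, then ρ₀ ∈ λ₀·ℤ and ρ₁ ∈ λ₀·ℤ. -/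
open Matrix

/-!
Write `A = !![a, b; γ, d]` and `A' = !![a', b'; γ', d']`. The lower row of `D₁ A = A' D₀` gives
`μ₁ γ = γ' λ₀` and `γ' ρ₀ = μ₁ d - d' μ₀`, so with `μ₀ = ε λ₀`, `ε = ±1`, the element `γ γ' ρ₀` is
`λ₀` times an integer. The upper-left entry together with the determinant relation
`λ₁ μ₁ det A = det A' λ₀ μ₀` shows the same for `det A · γ γ' ρ₁`. It remains to divide by a
nonzero integer `n`: if `n y = m` in `Ẑ` then reducing modulo `|n|` gives `n ∣ m` in `ℤ`, and `Ẑ`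
is torsion-free, so `y = m / n` is an integer.
-/

theorem ZMod.castHom_eq_zero_of_nsmul_eq_zero {n k : ℕ} (hn : n ≠ 0) {y : ZMod (n * k)}
    (hy : n • y = 0) : ZMod.castHom (dvd_mul_left k n) (ZMod k) y = 0 := by
  obtain ⟨x, rfl⟩ := ZMod.intCast_surjective y
  rw [map_intCast, ZMod.intCast_zmod_eq_zero_iff_dvd]
  rw [nsmul_eq_mul, ← Int.cast_natCast, ← Int.cast_mul, ZMod.intCast_zmod_eq_zero_iff_dvd,
    Nat.cast_mul] at hy
  exact Int.dvd_of_mul_dvd_mul_left (by exact_mod_cast hn) hy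

namespace ZHat

theorem eq_zero_of_nsmul_eq_zero {n : ℕ} (hn : n ≠ 0) {z : ZHat} (h : n • z = 0) : z = 0 := by
  ext k
  let K : ℕ+ := ⟨n, Nat.pos_of_ne_zero hn⟩ * k
  have hK : n • z.1 K = 0 := congrFun (congrArg Subtype.val h) K
  rw [← z.2 k K (dvd_mul_left _ _)]
  exact ZMod.castHom_eq_zero_of_nsmul_eq_zero hn hK

instance : IsAddTorsionFree ZHat where
  nsmul_right_injective n hn a b hab :=
    sub_eq_zero.1 <| eq_zero_of_nsmul_eq_zero hn <| by simp only [smul_sub, hab, sub_self]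

theorem dvd_of_intCast_mul_eq {n m : ℤ} (hn : n ≠ 0) {y : ZHat} (h : (n : ZHat) * y = m) :
    n ∣ m := by
  let π : ZHat →+* ZMod n.natAbs :=
    (Pi.evalRingHom _ ⟨n.natAbs, Int.natAbs_pos.2 hn⟩).comp ZHatSubring.subtype
  have hπ := congrArg π h
  rw [map_mul, map_intCast, map_intCast,
    (ZMod.intCast_zmod_eq_zero_iff_dvd n n.natAbs).2 (Int.natAbs_dvd.2 dvd_rfl), zero_mul, eq_comm,
    ZMod.intCast_zmod_eq_zero_iff_dvd] at hπ
  exact Int.natAbs_dvd.1 hπ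

theorem exists_intCast_of_intCast_mul_eq {n m : ℤ} (hn : n ≠ 0) {y : ZHat}
    (h : (n : ZHat) * y = m) : ∃ s : ℤ, y = s := by
  obtain ⟨s, rfl⟩ := dvd_of_intCast_mul_eq hn h
  refine ⟨s, zsmul_right_injective hn ?_⟩
  simp only [zsmul_eq_mul, h, Int.cast_mul]

theorem exists_eq_unit_mul_intCast {n m : ℤ} (hn : n ≠ 0) {u : ZHatˣ} {y : ZHat}
    (h : (n : ZHat) * y = u * m) : ∃ s : ℤ, y = u * s := by
  obtain ⟨s, hs⟩ := exists_intCast_of_intCast_mul_eq hn (y := ↑u⁻¹ * y) <| by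
    rw [mul_left_comm, h, Units.inv_mul_cancel_left]
  exact ⟨s, by rw [← hs, Units.mul_inv_cancel_left]⟩

end ZHat

namespace Matrix

variable {R : Type*} [CommRing R] {lam0 mu0 lam1 mu1 rho0 rho1 : R} {A A' : Matrix (Fin 2) (Fin 2) R}

theorem entries_of_upperTriangular_intertwining
    (h : !![lam1, rho1; 0, mu1] * A = A' * !![lam0, rho0; 0, mu0]) :
    lam1 * A 0 0 + rho1 * A 1 0 = A' 0 0 * lam0 ∧ mu1 * A 1 0 = A' 1 0 * lam0 ∧
      mu1 * A 1 1 = A' 1 0 * rho0 + A' 1 1 * mu0 := by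
  have e := congr_fun₂ h
  exact ⟨by simpa [mul_apply, Fin.sum_univ_two] using e 0 0,
    by simpa [mul_apply, Fin.sum_univ_two] using e 1 0,
    by simpa [mul_apply, Fin.sum_univ_two] using e 1 1⟩

theorem det_of_upperTriangular_intertwining
    (h : !![lam1, rho1; 0, mu1] * A = A' * !![lam0, rho0; 0, mu0]) :
    lam1 * mu1 * A.det = A'.det * (lam0 * mu0) := by
  have hdet := congrArg det h
  rw [det_mul, det_mul, det_fin_two_of, det_fin_two_of] at hdet
  linear_combination hdet

theorem rho0_of_upperTriangular_intertwining {ε : R}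
    (h : !![lam1, rho1; 0, mu1] * A = A' * !![lam0, rho0; 0, mu0]) (hε : mu0 = ε * lam0) :
    A 1 0 * A' 1 0 * rho0 = lam0 * (A' 1 0 * A 1 1 - ε * A 1 0 * A' 1 1) := by
  obtain ⟨-, e10, e11⟩ := entries_of_upperTriangular_intertwining h
  linear_combination A 1 1 * e10 - A 1 0 * e11 - A 1 0 * A' 1 1 * hε

theorem rho1_of_upperTriangular_intertwining {ε : R}
    (h : !![lam1, rho1; 0, mu1] * A = A' * !![lam0, rho0; 0, mu0]) (hε : mu0 = ε * lam0)
    (hlam0 : IsUnit lam0) :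
    A.det * A 1 0 * A' 1 0 * rho1 =
      lam0 * (A.det * A' 1 0 * A' 0 0 - ε * A'.det * A 1 0 * A 0 0) := by
  obtain ⟨e00, e10, -⟩ := entries_of_upperTriangular_intertwining h
  have hdet := det_of_upperTriangular_intertwining h
  -- `μ₁ γ = γ' λ₀` turns the determinant relation into one for `λ₁`, after cancelling `λ₀`
  have hlam1 : A.det * A' 1 0 * lam1 = ε * A'.det * A 1 0 * lam0 :=
    hlam0.mul_right_cancel <| by
      linear_combination -A.det * lam1 * e10 + A 1 0 * hdet + A 1 0 * A'.det * lam0 * hε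
  linear_combination A.det * A' 1 0 * e00 - A 0 0 * hlam1

end Matrix

theorem triangular_compatibility_offdiag_general
    (lam0 mu0 lam1 mu1 : ZHatˣ) (rho0 rho1 : ZHat)
    (A A' : Matrix (Fin 2) (Fin 2) ℤ) (hA : IsUnit A.det)
    (hγ : A 1 0 ≠ 0) (hγ' : A' 1 0 ≠ 0)
    (h : (!![(lam1 : ZHat), rho1; 0, (mu1 : ZHat)]) * (A.map (Int.cast : ℤ → ZHat)) =
         (A'.map (Int.cast : ℤ → ZHat)) * (!![(lam0 : ZHat), rho0; 0, (mu0 : ZHat)]))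
    (hdiag : (lam0 : ZHat) = (mu0 : ZHat) ∨ (lam0 : ZHat) = -(mu0 : ZHat)) :
    (∃ s : ℤ, rho0 = (lam0 : ZHat) * (s : ZHat)) ∧
    (∃ t : ℤ, rho1 = (lam0 : ZHat) * (t : ZHat)) := by
  obtain ⟨ε, hε⟩ : ∃ ε : ℤ, (mu0 : ZHat) = ε * lam0 := by
    rcases hdiag with hdiag | hdiag
    · exact ⟨1, by simp [hdiag]⟩
    · exact ⟨-1, by simp [hdiag]⟩
  have hrho0 := rho0_of_upperTriangular_intertwining h hε
  have hrho1 := rho1_of_upperTriangular_intertwining h hε lam0.isUnit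
  simp only [map_apply, ← Int.cast_det] at hrho0 hrho1
  norm_cast at hrho0 hrho1
  exact ⟨ZHat.exists_eq_unit_mul_intCast (mul_ne_zero hγ hγ') hrho0,
    ZHat.exists_eq_unit_mul_intCast (mul_ne_zero (mul_ne_zero hA.ne_zero hγ) hγ') hrho1⟩

/-- in the upper-triangular compatibility situation `D₁·A = A'·D₀` with
`A, A' ∈ GL(2,ℤ)` having nonzero lower-left entries, if moreover `λ₀ = ±μ₀` then the
off-diagonal entries satisfy `ρ₀ ∈ λ₀·ℤ` and `ρ₁ ∈ λ₀·ℤ`. -/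
theorem triangular_compatibility_offdiag
    (lam0 mu0 lam1 mu1 : ZHatˣ) (rho0 rho1 : ZHat)
    (A A' : Matrix (Fin 2) (Fin 2) ℤ) (hA : IsUnit A.det) (hA' : IsUnit A'.det)
    (hγ : A 1 0 ≠ 0) (hγ' : A' 1 0 ≠ 0)
    (h : (!![(lam1 : ZHat), rho1; 0, (mu1 : ZHat)]) * (A.map (Int.cast : ℤ → ZHat)) =
         (A'.map (Int.cast : ℤ → ZHat)) * (!![(lam0 : ZHat), rho0; 0, (mu0 : ZHat)]))
    (hdiag : (lam0 : ZHat) = (mu0 : ZHat) ∨ (lam0 : ZHat) = -(mu0 : ZHat)) :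
    (∃ s : ℤ, rho0 = (lam0 : ZHat) * (s : ZHat)) ∧
    (∃ t : ℤ, rho1 = (lam0 : ZHat) * (t : ZHat)) :=
  triangular_compatibility_offdiag_general lam0 mu0 lam1 mu1 rho0 rho1 A A' hA hγ hγ' h hdiag
end

section
/- Every finite subgroup of GL(2,ℤ) has order at most 12. -/
/-!
The determinant maps `H` into `ℤˣ = {±1}`, so it suffices to bound by `6` the order of a finite
group `K` of integer matrices of determinant `1`.

Averaging gives a positive definite form `Q = ∑ gᵀ g` preserved by `K`. As `g J gᵀ = J` for
`J = !![0, -1; 1, 0]` and `det g = 1`, every element of `K` commutes with `M = J Q`, which has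
trace `0` and determinant `det Q > 0`. The commutant of such an `M` is `ℝ[M] ≅ ℂ`, a commutative
domain, so `K` is cyclic.

If `A ∈ K` had trace `|t| > 2`, then `|tr (A ^ k)|` would grow strictly by the recurrence
`tr (A ^ (k + 2)) = t tr (A ^ (k + 1)) - tr (A ^ k)`, contradicting `A ^ n = 1`. For `|t| ≤ 2`,
Cayley–Hamilton `A ^ 2 = t A - 1` gives `A ^ 4 = 1` or `A ^ 6 = 1`, so a generator of `K` has
order at most `6`.
-/

open Matrix

theorem strictMono_abs_of_recurrence {R : Type*} [CommRing R] [LinearOrder R]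
    [IsStrictOrderedRing R] {t : R} (ht : 2 ≤ |t|) {c : ℕ → R}
    (hc : ∀ k, c (k + 2) = t * c (k + 1) - c k) (h01 : |c 0| < |c 1|) :
    StrictMono fun k ↦ |c k| := by
  refine strictMono_nat_of_lt_succ fun k ↦ ?_
  induction k with
  | zero => exact h01
  | succ k ih =>
    have h := abs_sub_abs_le_abs_sub (t * c (k + 1)) (c k)
    rw [abs_mul, ← hc] at h
    nlinarith [abs_nonneg (c (k + 1))]

namespace Matrix

section CommRing

variable {R : Type*} [CommRing R]

theorem mul_self_fin_two (A : Matrix (Fin 2) (Fin 2) R) : A * A = A.trace • A - A.det • 1 := by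
  ext i j
  fin_cases i <;> fin_cases j <;>
    simp [mul_apply, trace_fin_two, det_fin_two] <;> ring

theorem trace_pow_add_two {A : Matrix (Fin 2) (Fin 2) R} (hA : A.det = 1) (k : ℕ) :
    (A ^ (k + 2)).trace = A.trace * (A ^ (k + 1)).trace - (A ^ k).trace := by
  rw [pow_add, pow_two, mul_self_fin_two, hA, one_smul, mul_sub, mul_smul_comm, mul_one,
    ← pow_succ, trace_sub, trace_smul, smul_eq_mul]

theorem mul_mul_transpose_fin_two (A : Matrix (Fin 2) (Fin 2) R) :
    A * !![0, -1; 1, 0] * Aᵀ = A.det • !![0, -1; 1, 0] := by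
  ext i j
  fin_cases i <;> fin_cases j <;>
    simp [mul_apply, det_fin_two] <;> ring

theorem det_smul_one_add_smul_of_trace_eq_zero {M : Matrix (Fin 2) (Fin 2) R}
    (hM : M.trace = 0) (a b : R) : (a • 1 + b • M).det = a ^ 2 + b ^ 2 * M.det := by
  rw [trace_fin_two] at hM
  simp [det_fin_two]
  linear_combination a * b * hM

end CommRing

section OrderedRing

variable {R : Type*} [CommRing R] [LinearOrder R] [IsStrictOrderedRing R]

theorem abs_trace_le_two_of_pow_eq_one {A : Matrix (Fin 2) (Fin 2) R} (hdet : A.det = 1)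
    {n : ℕ} (hn : n ≠ 0) (hA : A ^ n = 1) : |A.trace| ≤ 2 := by
  by_contra! ht
  have hmono := strictMono_abs_of_recurrence (c := fun k ↦ (A ^ k).trace) ht.le
    (trace_pow_add_two hdet) (by simpa)
  simpa [hA] using hmono (Nat.pos_of_ne_zero hn)

theorem eq_one_of_pow_eq_one_of_trace_eq_two {A : Matrix (Fin 2) (Fin 2) R} (hdet : A.det = 1)
    (htr : A.trace = 2) {n : ℕ} (hn : n ≠ 0) (hA : A ^ n = 1) : A = 1 := by
  have hsq : A * A = 2 • A - 1 := by
    rw [mul_self_fin_two, hdet, htr, one_smul, ofNat_smul_eq_nsmul]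
  have hpow : ∀ k : ℕ, A ^ k = 1 + k • (A - 1) := by
    intro k
    induction k with
    | zero => simp
    | succ k ih =>
      rw [pow_succ, ih, add_mul, one_mul, smul_mul_assoc, sub_mul, hsq, one_mul]
      module
  have hn0 : n • (A - 1) = 0 := by simpa [hA] using hpow n
  ext i j
  simpa [hn, sub_eq_zero] using congr_fun₂ hn0 i j

end OrderedRing

theorem pow_four_eq_one_or_pow_six_eq_one {A : Matrix (Fin 2) (Fin 2) ℤ} (hdet : A.det = 1)
    {n : ℕ} (hn : n ≠ 0) (hA : A ^ n = 1) : A ^ 4 = 1 ∨ A ^ 6 = 1 := by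
  have hsq : A * A = A.trace • A - 1 := by rw [mul_self_fin_two, hdet, one_smul]
  have htr := abs_le.mp (abs_trace_le_two_of_pow_eq_one hdet hn hA)
  obtain htr | htr | htr | htr | htr :
      A.trace = -2 ∨ A.trace = -1 ∨ A.trace = 0 ∨ A.trace = 1 ∨ A.trace = 2 := by omega
  · have hneg : -A = 1 := by
      refine eq_one_of_pow_eq_one_of_trace_eq_two (n := 2 * n) (by simp [det_neg, hdet])
        (by simp [htr]) (by omega) ?_
      rw [pow_mul, neg_sq, ← pow_mul, mul_comm, pow_mul, hA, one_pow]
    left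
    rw [← neg_neg A, hneg]
    norm_num
  · right
    rw [htr, neg_smul, one_smul] at hsq
    have h3 : A ^ 3 = 1 := by
      rw [pow_succ', pow_two, hsq, mul_sub, mul_neg, hsq, mul_one]
      abel
    rw [show 6 = 3 * 2 by rfl, pow_mul, h3, one_pow]
  · left
    rw [htr, zero_smul, zero_sub] at hsq
    rw [show 4 = 2 * 2 by rfl, pow_mul, pow_two A, hsq]
    norm_num
  · right
    rw [htr, one_smul] at hsq
    have h3 : A ^ 3 = -1 := by
      rw [pow_succ', pow_two, hsq, mul_sub, hsq, mul_one]
      abel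
    rw [show 6 = 3 * 2 by rfl, pow_mul, h3]
    norm_num
  · left
    rw [eq_one_of_pow_eq_one_of_trace_eq_two hdet htr hn hA, one_pow]

section Field

variable {F : Type*} [Field F]

theorem exists_eq_smul_one_add_smul_of_commute {M A : Matrix (Fin 2) (Fin 2) F}
    (hM : M 1 0 ≠ 0) (h : Commute A M) : ∃ a b : F, A = a • 1 + b • M := by
  have h00 := congr_fun₂ h.eq 0 0
  have h10 := congr_fun₂ h.eq 1 0
  simp only [mul_apply, Fin.sum_univ_two] at h00 h10
  refine ⟨A 0 0 - A 1 0 / M 1 0 * M 0 0, A 1 0 / M 1 0, ?_⟩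
  ext i j
  fin_cases i <;> fin_cases j <;> simp <;> field_simp
  · linear_combination h00
  · linear_combination h10

theorem mem_adjoin_singleton_of_commute {M A : Matrix (Fin 2) (Fin 2) F} (hM : M 1 0 ≠ 0)
    (h : Commute A M) : A ∈ Algebra.adjoin F {M} := by
  obtain ⟨a, b, rfl⟩ := exists_eq_smul_one_add_smul_of_commute hM h
  exact add_mem (Subalgebra.smul_mem _ (one_mem _) a)
    (Subalgebra.smul_mem _ (Algebra.self_mem_adjoin_singleton F M) b)

variable [LinearOrder F] [IsStrictOrderedRing F]

theorem apply_one_zero_ne_zero_of_det_pos {M : Matrix (Fin 2) (Fin 2) F} (htr : M.trace = 0)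
    (hdet : 0 < M.det) : M 1 0 ≠ 0 := by
  intro h0
  rw [trace_fin_two] at htr
  rw [det_fin_two, h0, mul_zero, sub_zero, show M 1 1 = -M 0 0 by linear_combination htr] at hdet
  nlinarith [sq_nonneg (M 0 0)]

theorem isDomain_adjoin_singleton {M : Matrix (Fin 2) (Fin 2) F} (htr : M.trace = 0)
    (hdet : 0 < M.det) : IsDomain (Algebra.adjoin F {M}) := by
  have eq_zero_of_det : ∀ x ∈ Algebra.adjoin F {M}, x.det = 0 → x = 0 := by
    intro x hx hx0
    obtain ⟨a, b, rfl⟩ := exists_eq_smul_one_add_smul_of_commute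
      (apply_one_zero_ne_zero_of_det_pos htr hdet) (Algebra.commute_of_mem_adjoin_self hx).symm
    rw [det_smul_one_add_smul_of_trace_eq_zero htr] at hx0
    have hb : b = 0 := by
      have : b ^ 2 * M.det = 0 := by nlinarith [sq_nonneg a, mul_nonneg (sq_nonneg b) hdet.le]
      simpa [hdet.ne'] using this
    have ha : a = 0 := by simpa [hb] using hx0
    simp [ha, hb]
  have : NoZeroDivisors (Algebra.adjoin F {M}) := ⟨fun {x y} hxy ↦ by
    have := congrArg (fun z : Algebra.adjoin F {M} ↦ (z : Matrix (Fin 2) (Fin 2) F).det) hxy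
    simp only [Subalgebra.coe_mul, det_mul, Subalgebra.coe_zero, det_zero] at this
    rcases mul_eq_zero.mp this with h | h
    · exact Or.inl (Subtype.ext (eq_zero_of_det x x.2 h))
    · exact Or.inr (Subtype.ext (eq_zero_of_det y y.2 h))⟩
  exact NoZeroDivisors.to_isDomain _

end Field

section InvariantForm

variable {n : Type*} [Fintype n] [DecidableEq n] {G : Type*} [Group G] [Fintype G]

def invariantForm (ρ : G →* Matrix n n ℝ) : Matrix n n ℝ := ∑ g, (ρ g)ᵀ * ρ g

theorem posDef_invariantForm (ρ : G →* Matrix n n ℝ) : (invariantForm ρ).PosDef := by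
  refine posDef_sum Finset.univ_nonempty fun g _ ↦ ?_
  rw [← conjTranspose_eq_transpose_of_trivial]
  exact .conjTranspose_mul_self _ (mulVec_injective_of_isUnit ((Group.isUnit g).map ρ))

theorem transpose_mul_invariantForm_mul (ρ : G →* Matrix n n ℝ) (g : G) :
    (ρ g)ᵀ * invariantForm ρ * ρ g = invariantForm ρ := by
  simp only [invariantForm, Finset.mul_sum, Finset.sum_mul]
  simp only [← mul_assoc, ← transpose_mul, mul_assoc _ _ (ρ g), ← map_mul]
  exact Fintype.sum_equiv (Equiv.mulRight g) _ _ fun _ ↦ rfl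

theorem trace_mul_invariantForm (ρ : G →* Matrix (Fin 2) (Fin 2) ℝ) :
    (!![0, -1; 1, 0] * invariantForm ρ).trace = 0 := by
  have := (posDef_invariantForm ρ).isHermitian.apply 0 1
  simp [trace_fin_two, vecMul, dotProduct, Fin.sum_univ_two] at this ⊢
  linarith

theorem commute_mul_invariantForm {ρ : G →* Matrix (Fin 2) (Fin 2) ℝ} {g : G}
    (hg : (ρ g).det = 1) : Commute (ρ g) (!![0, -1; 1, 0] * invariantForm ρ) := by
  have hQ : invariantForm ρ * ρ g = (ρ g⁻¹)ᵀ * invariantForm ρ := by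
    conv_lhs => rw [← transpose_mul_invariantForm_mul ρ g⁻¹]
    rw [mul_assoc, ← map_mul, inv_mul_cancel, map_one, mul_one]
  calc ρ g * (!![0, -1; 1, 0] * invariantForm ρ)
      = ρ g * !![0, -1; 1, 0] * (ρ g)ᵀ * ((ρ g⁻¹)ᵀ * invariantForm ρ) := by
        rw [mul_assoc _ (ρ g)ᵀ, ← mul_assoc (ρ g)ᵀ, ← transpose_mul, ← map_mul, inv_mul_cancel,
          map_one, transpose_one, one_mul, mul_assoc]
    _ = !![0, -1; 1, 0] * invariantForm ρ * ρ g := by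
        rw [mul_mul_transpose_fin_two, hg, one_smul, ← hQ, mul_assoc]

end InvariantForm

open scoped IsMulCommutative in
theorem isCyclic_of_det_eq_one {G : Type*} [Group G] [Finite G]
    (ρ : G →* Matrix (Fin 2) (Fin 2) ℝ) (hρ : Function.Injective ρ)
    (hdet : ∀ g, (ρ g).det = 1) : IsCyclic G := by
  have := Fintype.ofFinite G
  set M := !![0, -1; 1, 0] * invariantForm ρ
  have htr : M.trace = 0 := trace_mul_invariantForm ρ
  have hdetM : 0 < M.det := by
    rw [det_mul, det_fin_two_of]
    simpa using (posDef_invariantForm ρ).det_pos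
  have := isDomain_adjoin_singleton htr hdetM
  have hmem (g : G) : ρ g ∈ Algebra.adjoin ℝ {M} :=
    mem_adjoin_singleton_of_commute (apply_one_zero_ne_zero_of_det_pos htr hdetM)
      (commute_mul_invariantForm (hdet g))
  exact isCyclic_of_injective_ringHom (ρ.codRestrict _ hmem)
    fun x y h ↦ hρ (congrArg Subtype.val h)

theorem card_le_six_of_det_eq_one {G : Type*} [Group G] [Finite G]
    (ρ : G →* Matrix (Fin 2) (Fin 2) ℤ) (hρ : Function.Injective ρ)
    (hdet : ∀ g, (ρ g).det = 1) : Nat.card G ≤ 6 := by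
  have : IsCyclic G := isCyclic_of_det_eq_one ((Int.castRingHom ℝ).mapMatrix.toMonoidHom.comp ρ)
    ((map_injective Int.cast_injective).comp hρ) fun g ↦ by
      rw [MonoidHom.comp_apply, RingHom.toMonoidHom_eq_coe, MonoidHom.coe_coe, ← RingHom.map_det,
        hdet, map_one]
  obtain ⟨g, hg⟩ := IsCyclic.exists_generator (α := G)
  rw [← orderOf_eq_card_of_forall_mem_zpowers hg]
  have hpow : g ^ 4 = 1 ∨ g ^ 6 = 1 := by
    have hρg := pow_four_eq_one_or_pow_six_eq_one (hdet g) (orderOf_pos g).ne'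
      (by rw [← map_pow, pow_orderOf_eq_one, map_one])
    simpa only [← map_pow, ← map_one ρ, hρ.eq_iff] using hρg
  rcases hpow with h | h
  · exact (orderOf_le_of_pow_eq_one (by norm_num) h).trans (by norm_num)
  · exact orderOf_le_of_pow_eq_one (by norm_num) h

end Matrix

/-- every finite subgroup of `GL(2, ℤ)` has order at most `12`. -/
theorem finite_subgroup_GL2Z_card_le_twelve
    (H : Subgroup (GL (Fin 2) ℤ)) [Finite H] :
    Nat.card H ≤ 12 := by
  let detH : H →* ℤˣ := GeneralLinearGroup.det.comp H.subtype
  have hker : Nat.card detH.ker ≤ 6 :=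
    card_le_six_of_det_eq_one ((Units.coeHom _).comp (H.subtype.comp detH.ker.subtype))
      (fun x y h ↦ Subtype.ext (Subtype.ext (Units.ext h))) fun g ↦ congrArg Units.val g.2
  have hindex : detH.ker.index ≤ 2 := by
    rw [Subgroup.index_ker]
    exact (Subgroup.card_le_card_group _).trans_eq (by simp)
  calc Nat.card H = Nat.card detH.ker * detH.ker.index := (Subgroup.card_mul_index _).symm
    _ ≤ 6 * 2 := Nat.mul_le_mul hker hindex
end
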